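/- arXiv:1108.5645 — 2 statements merged into one kernel-verified Lean document; each statement's English description precedes it below -/
import Mathlib

section
/- Let V be a finite vector space over a finite field, K ≤ GL(V), and let G be the permutation group on V generated by K and all translations x ↦ x + v (so G = V ⋊ K in its affine action). Suppose 4·(|K| − 1)·Fix(K) < |V|, where Fix(K) = Σ_{g ∈ K, g ≠ 1} fix(g) and fix(g) is the number of fixed points of g. Then b(inv(G)) ≤ 2. In particular, b(inv(G)) ≤ 2 whenever 4·|K|·(|K| − 1)·fix(K) < |V|, where fix(K) = max_{g ∈ K, g ≠ 1} fix(g). -/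
open Set

/-- The diagonal relation `1_Γ` on a subset `Γ` of `Ω`. -/
def diagOn {Ω : Type*} (Γ : Set Ω) : Set (Ω × Ω) := {p | p.1 ∈ Γ ∧ p.1 = p.2}

/-- The full diagonal relation `1_Ω`. -/
def diagSet (Ω : Type*) : Set (Ω × Ω) := {p | p.1 = p.2}

/-- A coherent configuration on `Ω`: a partition `S` of `Ω × Ω` (into nonempty classes,
the *basic relations*) such that the diagonal is a union of classes, the transpose of a
basic relation is a basic relation, and the intersection numbers are well defined. -/
structure CohCfg (Ω : Type*) where
  S : Set (Set (Ω × Ω))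
  nonempty_of_mem : ∀ r ∈ S, r.Nonempty
  exists_unique_mem : ∀ p : Ω × Ω, ∃! r : Set (Ω × Ω), r ∈ S ∧ p ∈ r
  diag_of_mem : ∀ r ∈ S, ∀ p ∈ r, p.1 = p.2 → ∀ q ∈ r, q.1 = q.2
  swap_mem : ∀ r ∈ S, Prod.swap '' r ∈ S
  card_indep : ∀ r ∈ S, ∀ s ∈ S, ∀ t ∈ S, ∀ p ∈ t, ∀ q ∈ t,
    Nat.card {γ : Ω // (p.1, γ) ∈ r ∧ (γ, p.2) ∈ s} =
    Nat.card {γ : Ω // (q.1, γ) ∈ r ∧ (γ, q.2) ∈ s}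

namespace CohCfg

variable {Ω : Type*}

/-- The relations of `X`: the elements of `S^∪`, i.e. unions of basic relations. -/
def rel (X : CohCfg Ω) (u : Set (Ω × Ω)) : Prop := ∃ T ⊆ X.S, u = ⋃₀ T

/-- `Γ` is a fiber of `X`, i.e. `1_Γ` is a basic relation. -/
def fiber (X : CohCfg Ω) (Γ : Set Ω) : Prop := diagOn Γ ∈ X.S

/-- `X'` is a fission of `X` : every relation of `X` is a relation of `X'`. -/
def IsFission (X X' : CohCfg Ω) : Prop := ∀ u : Set (Ω × Ω), X.rel u → X'.rel u

/-- `X` is the complete coherent configuration: all singletons are basic relations. -/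
def Complete (X : CohCfg Ω) : Prop := ∀ p : Ω × Ω, {p} ∈ X.S

/-- `Γ` is a union of fibers of `X`. -/
def unionFibers (X : CohCfg Ω) (Γ : Set Ω) : Prop :=
  ∃ F ⊆ {Δ : Set Ω | X.fiber Δ}, Γ = ⋃₀ F

/-- `Δ` is a base of `X`: every fission of `X` in which all points of `Δ` are fibers is
complete. -/
def IsBase (X : CohCfg Ω) (Δ : Set Ω) : Prop :=
  ∀ X' : CohCfg Ω, X.IsFission X' → (∀ δ ∈ Δ, X'.fiber {δ}) → X'.Complete

/-- `P` is a generalized base of `X`: every fission of `X` in which each member of `P` is a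
union of fibers is complete. -/
def IsGenBase (X : CohCfg Ω) (P : Set (Set Ω)) : Prop :=
  ∀ X' : CohCfg Ω, X.IsFission X' → (∀ Γ ∈ P, X'.unionFibers Γ) → X'.Complete

/-- The base number `b(X)`. -/
noncomputable def bNum (X : CohCfg Ω) : ℕ :=
  sInf {n | ∃ Δ : Set Ω, Δ.ncard = n ∧ X.IsBase Δ}

/-- The generalized base number `gb(X)`. -/
noncomputable def gbNum (X : CohCfg Ω) : ℕ :=
  sInf {n | ∃ P : Set (Set Ω), P.ncard = n ∧ X.IsGenBase P}

/-- `X` is antisymmetric: every symmetric basic relation is contained in the diagonal. -/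
def Antisym (X : CohCfg Ω) : Prop :=
  ∀ r ∈ X.S, Prod.swap '' r = r → ∀ p ∈ r, p.1 = p.2

/-- `X` is a scheme (homogeneous): the diagonal is a basic relation. -/
def IsScheme (X : CohCfg Ω) : Prop := diagSet Ω ∈ X.S

/-- `Xα` is the smallest fission of `X` in which `{α}` is a fiber. -/
def SmallestFissionAt (X Xα : CohCfg Ω) (α : Ω) : Prop :=
  X.IsFission Xα ∧ Xα.fiber {α} ∧
    ∀ Y : CohCfg Ω, X.IsFission Y → Y.fiber {α} → Xα.IsFission Y

end CohCfg

/-- The orbits of a permutation group `G ≤ Sym(Ω)` acting componentwise on `Ω × Ω`,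
i.e. the basic relations of the coherent configuration `inv(G)`. -/
def orbSets {Ω : Type*} (G : Subgroup (Equiv.Perm Ω)) : Set (Set (Ω × Ω)) :=
  {r | ∃ p : Ω × Ω, r = {q | ∃ g ∈ G, q.1 = g p.1 ∧ q.2 = g p.2}}

/-- A transitive subgroup of `Sym(Ω)`. -/
def IsTransitiveSub {Ω : Type*} (G : Subgroup (Equiv.Perm Ω)) : Prop :=
  ∀ α β : Ω, ∃ g ∈ G, g α = β

/-- A primitive subgroup of `Sym(Ω)`: transitive, and every block (a set that each group
element maps to itself or to a disjoint set) is trivial. -/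
def IsPrimitiveSub {Ω : Type*} (G : Subgroup (Equiv.Perm Ω)) : Prop :=
  IsTransitiveSub G ∧
    ∀ Δ : Set Ω, (∀ g ∈ G, (fun x => g x) '' Δ = Δ ∨ Disjoint ((fun x => g x) '' Δ) Δ) →
      Δ.Subsingleton ∨ Δ = Set.univ

/-- The intersection number `c_{rs}^t` (well defined for basic relations `r,s,t`). -/
noncomputable def inum {Ω : Type*} (r s t : Set (Ω × Ω)) : ℕ :=
  sSup {n | ∃ p ∈ t, n = Nat.card {γ : Ω // (p.1, γ) ∈ r ∧ (γ, p.2) ∈ s}}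

/-- The valency `n_r` of a basic relation (well defined in a scheme). -/
noncomputable def valency {Ω : Type*} (r : Set (Ω × Ω)) : ℕ :=
  sSup {n | ∃ α : Ω, n = ({β : Ω | (α, β) ∈ r}).ncard}

/-- The composition `u·v` of two binary relations. -/
def compoRel {Ω : Type*} (u v : Set (Ω × Ω)) : Set (Ω × Ω) :=
  {p | ∃ γ : Ω, (p.1, γ) ∈ u ∧ (γ, p.2) ∈ v}

/-- `e` is an equivalence relation on all of `Ω`. -/
def IsEquivRel {Ω : Type*} (e : Set (Ω × Ω)) : Prop :=
  (∀ α : Ω, (α, α) ∈ e) ∧ (∀ p ∈ e, Prod.swap p ∈ e) ∧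
    ∀ a b c : Ω, (a, b) ∈ e → (b, c) ∈ e → (a, c) ∈ e

/-- A primitive scheme: the only equivalence relations among its relations are the trivial
ones. -/
def PrimScheme {Ω : Type*} (X : CohCfg Ω) : Prop :=
  X.IsScheme ∧ ∀ e : Set (Ω × Ω), X.rel e → IsEquivRel e → e = diagSet Ω ∨ e = Set.univ

/-- `X` is schurian: it is the coherent configuration of a permutation group. -/
def Schurian {Ω : Type*} (X : CohCfg Ω) : Prop :=
  ∃ G : Subgroup (Equiv.Perm Ω), X.S = orbSets G

/-- The indistinguishing number `c(X)`: the maximum over non-reflexive basic relations `s`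
of the number of points `γ` lying in the same basic relation to both entries of a pair of
`s`. -/
noncomputable def cnum {Ω : Type*} (X : CohCfg Ω) : ℕ :=
  sSup {k | ∃ s ∈ X.S, (∀ p ∈ s, p.1 ≠ p.2) ∧ ∃ p ∈ s,
    k = ({γ : Ω | ∃ u ∈ X.S, (p.1, γ) ∈ u ∧ (p.2, γ) ∈ u}).ncard}

/-- The maximal valency `n_max` of `X`. -/
noncomputable def nmax {Ω : Type*} (X : CohCfg Ω) : ℕ :=
  sSup {k | ∃ s ∈ X.S, ∃ α : Ω, k = ({β : Ω | (α, β) ∈ s}).ncard}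

/-- The orbits on `F × F` of the group `{x ↦ ax + b : a ∈ M, b ∈ F}`, i.e. the basic
relations of the cyclotomic scheme over `F` determined by `M ≤ Fˣ`. -/
def cycOrbSets {F : Type*} [Field F] (M : Subgroup Fˣ) : Set (Set (F × F)) :=
  {r | ∃ p : F × F, r = {q | ∃ a ∈ M, ∃ b : F,
    q.1 = (a : F) * p.1 + b ∧ q.2 = (a : F) * p.2 + b}}

/-- A witness that `X` is (isomorphic to) a cyclotomic scheme over a finite field. -/
structure CycWitness {Ω : Type u} (X : CohCfg Ω) where
  F : Type u
  [fieldF : Field F]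
  [fintypeF : Fintype F]
  M : Subgroup Fˣ
  e : Ω ≃ F
  mem_iff : ∀ r : Set (Ω × Ω), r ∈ X.S ↔
    (fun q : Ω × Ω => (e q.1, e q.2)) '' r ∈ cycOrbSets M

/-- The equivalence relation on `Ω1 × Ω2` whose classes are the sets `Ω1 × {α}`. -/
def wreathE (Ω1 Ω2 : Type*) : Set ((Ω1 × Ω2) × (Ω1 × Ω2)) := {p | p.1.2 = p.2.2}

/-- The defining conditions of the wreath product `X1 ≀ X2`: the equivalence relation `e`
with classes `Ω1 × {α}` is a relation of `X`; for each `α` the restriction of `X` to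
`Ω1 × {α}`, transported along the natural projection, equals `X1`; and the quotient of `X`
modulo `e` equals `X2`. -/
def WreathCond {Ω1 Ω2 : Type*} (X : CohCfg (Ω1 × Ω2)) (X1 : CohCfg Ω1) (X2 : CohCfg Ω2) :
    Prop :=
  X.rel (wreathE Ω1 Ω2) ∧
  (∀ α : Ω2,
    {u : Set (Ω1 × Ω1) | u.Nonempty ∧ ∃ r ∈ X.S, u = {q | ((q.1, α), (q.2, α)) ∈ r}}
      = X1.S) ∧
  {v : Set (Ω2 × Ω2) | ∃ r ∈ X.S, v = {q | ∃ x y : Ω1, ((x, q.1), (y, q.2)) ∈ r}} = X2.S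

/-- `X` is the wreath product `X1 ≀ X2`: the smallest coherent configuration on `Ω1 × Ω2`
satisfying `WreathCond`. -/
def IsWreath {Ω1 Ω2 : Type*} (X : CohCfg (Ω1 × Ω2)) (X1 : CohCfg Ω1) (X2 : CohCfg Ω2) :
    Prop :=
  WreathCond X X1 X2 ∧ ∀ Y : CohCfg (Ω1 × Ω2), WreathCond Y X1 X2 → X.IsFission Y

/-- The basic relations of the exponentiation `Y ↑ L` of a coherent configuration with
basic relation set `T` on `Γ` by a permutation group `L ≤ Sym({1,…,m})`:
the relations `⋃_{l ∈ L} (t_1 ⊗ ⋯ ⊗ t_m)^l` with all `t_i ∈ T`. -/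
def expoS {Γ : Type*} {m : ℕ} (T : Set (Set (Γ × Γ))) (L : Subgroup (Equiv.Perm (Fin m))) :
    Set (Set ((Fin m → Γ) × (Fin m → Γ))) :=
  {u | ∃ t : Fin m → Set (Γ × Γ), (∀ i, t i ∈ T) ∧
    u = {p | ∃ l ∈ L, ∀ i : Fin m, (p.1 i, p.2 i) ∈ t (l i)}}

/-- Hamming distance on `Γ^m`. -/
noncomputable def hammingD {Γ : Type*} {m : ℕ} (β δ : Fin m → Γ) : ℕ :=
  Set.ncard {i : Fin m | β i ≠ δ i}

/-- Orbits on `V × V` of the affine group `G = V ⋊ K` generated by `K ≤ GL(V)` and all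
translations (the basic relations of `inv(G)`). -/
def affOrbSets {F V : Type*} [Field F] [AddCommGroup V] [Module F V]
    (K : Subgroup (V ≃ₗ[F] V)) : Set (Set (V × V)) :=
  {r | ∃ p : V × V, r = {q | ∃ k ∈ K, ∃ v : V, q.1 = k p.1 + v ∧ q.2 = k p.2 + v}}

/-- `Fix(K) = Σ_{g ∈ K, g ≠ 1} fix(g)`, counted as the number of pairs `(g, v)` with
`g ∈ K \ {1}` and `g v = v`. -/
noncomputable def FixSum {F V : Type*} [Field F] [AddCommGroup V] [Module F V]
    (K : Subgroup (V ≃ₗ[F] V)) : ℕ :=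
  Nat.card {x : K × V // x.1 ≠ 1 ∧ (x.1 : V ≃ₗ[F] V) x.2 = x.2}

/-- `fix(K) = max_{g ∈ K, g ≠ 1} fix(g)`. -/
noncomputable def fixMax {F V : Type*} [Field F] [AddCommGroup V] [Module F V]
    (K : Subgroup (V ≃ₗ[F] V)) : ℕ :=
  sSup {n | ∃ g : K, g ≠ 1 ∧ n = Nat.card {v : V // (g : V ≃ₗ[F] V) v = v}}

/-- Antisymmetry of a family of basic relations. -/
def AntisymS {Γ : Type*} (T : Set (Set (Γ × Γ))) : Prop :=
  ∀ r ∈ T, Prod.swap '' r = r → ∀ p ∈ r, p.1 = p.2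

/-- `H ≤ Sym(F_q^e)` is a solvable group containing all translations whose stabilizer of
zero is an irreducible subgroup of `GL(e,q)` that is primitive as a linear group, i.e.
`inv(H)` is a linearly primitive scheme. -/
def LinPrimGroup (q e : ℕ) (H : Subgroup (Equiv.Perm (Fin e → ZMod q))) : Prop :=
  IsSolvable ↥H ∧
  (∀ v : Fin e → ZMod q, Equiv.addRight v ∈ H) ∧
  (∀ g ∈ H, g 0 = 0 → IsLinearMap (ZMod q) ⇑g) ∧
  (∀ W : Submodule (ZMod q) (Fin e → ZMod q),
      (∀ g ∈ H, g 0 = 0 → ∀ w ∈ W, g w ∈ W) → W = ⊥ ∨ W = ⊤) ∧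
  ¬ ∃ (s : ℕ) (V : Fin s → Submodule (ZMod q) (Fin e → ZMod q)),
      2 ≤ s ∧ (∀ i, V i ≠ ⊥) ∧ (⨆ i, V i) = ⊤ ∧
      (∀ i, V i ⊓ (⨆ j, ⨆ _ : j ≠ i, V j) = ⊥) ∧
      (∀ g ∈ H, g 0 = 0 → ∀ i, ∃ j,
        (fun x => g x) '' ((V i : Set (Fin e → ZMod q))) = (V j : Set (Fin e → ZMod q)))

namespace CohCfg

variable {Ω : Type*}

/-- The basic relation containing a pair. -/
noncomputable def cls (X : CohCfg Ω) (p : Ω × Ω) : Set (Ω × Ω) :=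
  (X.exists_unique_mem p).choose

lemma cls_mem_S (X : CohCfg Ω) (p : Ω × Ω) : X.cls p ∈ X.S :=
  (X.exists_unique_mem p).choose_spec.1.1

lemma mem_cls (X : CohCfg Ω) (p : Ω × Ω) : p ∈ X.cls p :=
  (X.exists_unique_mem p).choose_spec.1.2

lemma cls_eq (X : CohCfg Ω) {p : Ω × Ω} {r : Set (Ω × Ω)} (hr : r ∈ X.S) (hp : p ∈ r) :
    r = X.cls p :=
  (X.exists_unique_mem p).choose_spec.2 r ⟨hr, hp⟩

lemma fst_fiber (X : CohCfg Ω) {r : Set (Ω × Ω)} (hr : r ∈ X.S) {p q : Ω × Ω}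
    (hp : p ∈ r) (hq : q ∈ r) : (q.1, q.1) ∈ X.cls (p.1, p.1) := by
  set d := X.cls (p.1, p.1) with hd
  have hdS : d ∈ X.S := X.cls_mem_S _
  have hdm : (p.1, p.1) ∈ d := X.mem_cls _
  have hdiag : ∀ q' ∈ d, q'.1 = q'.2 := X.diag_of_mem d hdS (p.1, p.1) hdm rfl
  have hcard := X.card_indep d hdS r hr r hr p hp q hq
  have h1 : Nat.card {x : Ω // (p.1, x) ∈ d ∧ (x, p.2) ∈ r} = 1 := by
    rw [Nat.card_eq_one_iff_unique]
    refine ⟨⟨fun a b => ?_⟩, ⟨⟨p.1, hdm, by rwa [Prod.mk.eta]⟩⟩⟩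
    have ha := hdiag _ a.2.1
    have hb := hdiag _ b.2.1
    exact Subtype.ext (ha.symm.trans hb)
  rw [h1] at hcard
  have h2 : Nonempty {x : Ω // (q.1, x) ∈ d ∧ (x, q.2) ∈ r} := by
    apply (Nat.card_ne_zero.mp ?_).1
    rw [← hcard]
    exact one_ne_zero
  obtain ⟨x, hx1, _⟩ := h2
  have hq1x : q.1 = x := hdiag _ hx1
  rwa [← hq1x] at hx1

lemma complete_of_forall_fiber (X : CohCfg Ω) (h : ∀ γ : Ω, X.fiber {γ}) : X.Complete := by
  have key : ∀ r ∈ X.S, ∀ p ∈ r, ∀ q ∈ r, q.1 = p.1 := by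
    intro r hr p hp q hq
    have h1 := X.fst_fiber hr hp hq
    have hcls : diagOn {p.1} = X.cls (p.1, p.1) := X.cls_eq (h p.1) ⟨rfl, rfl⟩
    rw [← hcls] at h1
    exact h1.1
  intro p
  have : X.cls p = {p} := by
    apply Set.Subset.antisymm
    · intro q hq
      have h1 : q.1 = p.1 := key _ (X.cls_mem_S p) _ (X.mem_cls p) _ hq
      have hs : Prod.swap '' X.cls p ∈ X.S := X.swap_mem _ (X.cls_mem_S p)
      have h2 : q.2 = p.2 := by
        have := key _ hs _ ⟨p, X.mem_cls p, rfl⟩ _ ⟨q, hq, rfl⟩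
        simpa using this
      simp only [Set.mem_singleton_iff]
      exact Prod.ext h1 h2
    · intro q hq
      simp only [Set.mem_singleton_iff] at hq
      rw [hq]; exact X.mem_cls p
  rw [← this]
  exact X.cls_mem_S p

lemma nbhd_mem (X : CohCfg Ω) {α γ δ δ' : Ω} (hα : X.fiber {α})
    (hδ : (α, δ) ∈ X.cls (α, γ)) (hδ' : (δ', δ') ∈ X.cls (δ, δ)) :
    (α, δ') ∈ X.cls (α, γ) := by
  have hfirst : ∀ x y : Ω, (x, y) ∈ X.cls (α, γ) → x = α := by
    intro x y hxy
    have h1 := X.fst_fiber (X.cls_mem_S (α, γ)) (X.mem_cls (α, γ)) hxy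
    have hcls : diagOn {α} = X.cls (α, α) := X.cls_eq hα ⟨rfl, rfl⟩
    rw [← hcls] at h1
    exact h1.1
  set r := X.cls (α, γ) with hrdef
  have hrS : r ∈ X.S := X.cls_mem_S _
  have hsS : Prod.swap '' r ∈ X.S := X.swap_mem _ hrS
  have htS : X.cls (δ, δ) ∈ X.S := X.cls_mem_S _
  have hcard := X.card_indep _ hsS r hrS _ htS (δ, δ) (X.mem_cls _) (δ', δ') hδ'
  have h1 : Nat.card {x : Ω // (δ, x) ∈ Prod.swap '' r ∧ (x, δ) ∈ r} = 1 := by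
    rw [Nat.card_eq_one_iff_unique]
    constructor
    · constructor
      intro a b
      have ha : a.val = α := hfirst _ _ a.2.2
      have hb : b.val = α := hfirst _ _ b.2.2
      exact Subtype.ext (ha.trans hb.symm)
    · exact ⟨⟨α, ⟨(α, δ), hδ, rfl⟩, hδ⟩⟩
  rw [h1] at hcard
  have h2 : Nonempty {x : Ω // (δ', x) ∈ Prod.swap '' r ∧ (x, δ') ∈ r} := by
    apply (Nat.card_ne_zero.mp ?_).1
    rw [← hcard]
    exact one_ne_zero
  obtain ⟨x, _, hx2⟩ := h2
  have hxα : x = α := hfirst _ _ hx2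
  rwa [hxα] at hx2

lemma cls_subset_of_fission {X X' : CohCfg Ω} (h : X.IsFission X') {r : Set (Ω × Ω)}
    (hr : r ∈ X.S) {p : Ω × Ω} (hp : p ∈ r) : X'.cls p ⊆ r := by
  have hrel : X.rel r := ⟨{r}, by simpa using hr, (Set.sUnion_singleton r).symm⟩
  obtain ⟨T, hT, hU⟩ := h r hrel
  subst hU
  obtain ⟨s, hsT, hps⟩ := hp
  have hcl := X'.cls_eq (hT hsT) hps
  rw [← hcl]
  exact Set.subset_sUnion_of_mem hsT

lemma fiber_of_sep {X X' : CohCfg Ω} (h : X.IsFission X') {θ1 θ2 γ : Ω}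
    (h1 : X'.fiber {θ1}) (h2 : X'.fiber {θ2})
    (hsep : ∀ δ : Ω, (θ1, δ) ∈ X.cls (θ1, γ) → (θ2, δ) ∈ X.cls (θ2, γ) → δ = γ) :
    X'.fiber {γ} := by
  have key : ∀ δ' : Ω, (δ', δ') ∈ X'.cls (γ, γ) → δ' = γ := by
    intro δ' hδ'
    have m1 : (θ1, δ') ∈ X'.cls (θ1, γ) := X'.nbhd_mem h1 (X'.mem_cls _) hδ'
    have m2 : (θ2, δ') ∈ X'.cls (θ2, γ) := X'.nbhd_mem h2 (X'.mem_cls _) hδ'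
    exact hsep δ' (cls_subset_of_fission h (X.cls_mem_S (θ1, γ)) (X.mem_cls _) m1)
      (cls_subset_of_fission h (X.cls_mem_S (θ2, γ)) (X.mem_cls _) m2)
  have heq : diagOn {γ} = X'.cls (γ, γ) := by
    apply Set.Subset.antisymm
    · rintro ⟨a, b⟩ ⟨ha, hab⟩
      simp only [Set.mem_singleton_iff] at ha
      subst ha; cases hab
      exact X'.mem_cls _
    · rintro ⟨a, b⟩ hq
      have hab : a = b :=
        X'.diag_of_mem _ (X'.cls_mem_S _) (γ, γ) (X'.mem_cls _) rfl (a, b) hq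
      subst hab
      have := key a hq
      exact ⟨this, rfl⟩
  unfold fiber
  rw [heq]
  exact X'.cls_mem_S _

end CohCfg
set_option linter.unusedSectionVars false

open scoped Classical

section CountAux

variable {F V : Type*} [Field F] [AddCommGroup V] [Module F V] [Fintype V]
variable (K : Subgroup (V ≃ₗ[F] V)) [Fintype K]

private lemma stmt16_line_card_le (k' : K) (w : V) :
    (Finset.univ.filter fun b : V => b - (k' : V ≃ₗ[F] V) b = w).card ≤
      (Finset.univ.filter fun v : V => (k' : V ≃ₗ[F] V) v = v).card := by
  rcases Finset.eq_empty_or_nonempty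
      (Finset.univ.filter fun b : V => b - (k' : V ≃ₗ[F] V) b = w) with h | h
  · simp [h]
  · obtain ⟨b0, hb0⟩ := h
    have hb0' : b0 - (k' : V ≃ₗ[F] V) b0 = w := (Finset.mem_filter.mp hb0).2
    apply Finset.card_le_card_of_injOn (fun b => b - b0)
    · intro b hb
      have hb' : b - (k' : V ≃ₗ[F] V) b = w := (Finset.mem_filter.mp hb).2
      refine Finset.mem_filter.mpr ⟨Finset.mem_univ _, ?_⟩
      have h3 : b - (k' : V ≃ₗ[F] V) b = b0 - (k' : V ≃ₗ[F] V) b0 := hb'.trans hb0'.symm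
      have hz := sub_eq_zero_of_eq h3
      apply eq_of_sub_eq_zero
      calc (k' : V ≃ₗ[F] V) (b - b0) - (b - b0)
          = ((k' : V ≃ₗ[F] V) b - (k' : V ≃ₗ[F] V) b0) - (b - b0) := by rw [map_sub]
        _ = -((b - (k' : V ≃ₗ[F] V) b) - (b0 - (k' : V ≃ₗ[F] V) b0)) := by abel
        _ = 0 := by rw [hz, neg_zero]
    · intro x _ y _ hxy
      exact sub_left_inj.mp hxy

private lemma stmt16_pairline_card_le (k' : K) (g : V → V) :
    (Finset.univ.filter fun ab : V × V => ab.2 - (k' : V ≃ₗ[F] V) ab.2 = g ab.1).card ≤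
      Fintype.card V * (Finset.univ.filter fun v : V => (k' : V ≃ₗ[F] V) v = v).card := by
  set b0 : V → V := fun a => if h : ∃ b : V, b - (k' : V ≃ₗ[F] V) b = g a then h.choose else 0
    with hb0
  have hcard : ((Finset.univ : Finset V) ×ˢ
        (Finset.univ.filter fun v : V => (k' : V ≃ₗ[F] V) v = v)).card
      = Fintype.card V * (Finset.univ.filter fun v : V => (k' : V ≃ₗ[F] V) v = v).card := by
    rw [Finset.card_product, Finset.card_univ]
  rw [← hcard]
  apply Finset.card_le_card_of_injOn (fun ab => (ab.1, ab.2 - b0 ab.1))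
  · intro ab hab
    have hab' : ab.2 - (k' : V ≃ₗ[F] V) ab.2 = g ab.1 := (Finset.mem_filter.mp hab).2
    have hex : ∃ b : V, b - (k' : V ≃ₗ[F] V) b = g ab.1 := ⟨ab.2, hab'⟩
    have hspec : b0 ab.1 - (k' : V ≃ₗ[F] V) (b0 ab.1) = g ab.1 := by
      rw [hb0]; simp only [hex, dif_pos]; exact hex.choose_spec
    rw [Finset.mem_coe, Finset.mem_product]
    refine ⟨Finset.mem_univ _, Finset.mem_filter.mpr ⟨Finset.mem_univ _, ?_⟩⟩
    have h3 : ab.2 - (k' : V ≃ₗ[F] V) ab.2 = b0 ab.1 - (k' : V ≃ₗ[F] V) (b0 ab.1) :=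
      hab'.trans hspec.symm
    have hz := sub_eq_zero_of_eq h3
    apply eq_of_sub_eq_zero
    calc (k' : V ≃ₗ[F] V) (ab.2 - b0 ab.1) - (ab.2 - b0 ab.1)
        = ((k' : V ≃ₗ[F] V) ab.2 - (k' : V ≃ₗ[F] V) (b0 ab.1)) - (ab.2 - b0 ab.1) := by
          rw [map_sub]
      _ = -((ab.2 - (k' : V ≃ₗ[F] V) ab.2) - (b0 ab.1 - (k' : V ≃ₗ[F] V) (b0 ab.1))) := by
          abel
      _ = 0 := by rw [hz, neg_zero]
  · intro x _ y _ hxy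
    simp only [Prod.mk.injEq] at hxy
    obtain ⟨h1, h2⟩ := hxy
    rw [h1] at h2
    exact Prod.ext h1 (sub_left_inj.mp h2)

private lemma stmt16_count_aux (f : K → K → V → V) (S : Finset (V × V))
    (hS : ∀ ab ∈ S, ∃ k k' : K, k ≠ 1 ∧ k' ≠ 1 ∧
      ab.2 - (k' : V ≃ₗ[F] V) ab.2 = f k k' ab.1) :
    S.card ≤ (Fintype.card K - 1) * (Fintype.card V *
      ∑ k' ∈ Finset.univ.filter (fun k' : K => k' ≠ 1),
        (Finset.univ.filter fun v : V => (k' : V ≃ₗ[F] V) v = v).card) := by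
  set P : Finset K := Finset.univ.filter (fun k : K => k ≠ 1) with hP
  have hPcard : P.card = Fintype.card K - 1 := by
    rw [hP, Finset.filter_ne', Finset.card_erase_of_mem (Finset.mem_univ _),
      Finset.card_univ]
  have hsub : S ⊆ P.biUnion (fun k => P.biUnion (fun k' =>
      Finset.univ.filter fun ab : V × V =>
        ab.2 - (k' : V ≃ₗ[F] V) ab.2 = f k k' ab.1)) := by
    intro ab hab
    obtain ⟨k, k', hk, hk', heq⟩ := hS ab hab
    refine Finset.mem_biUnion.mpr ⟨k, ?_, Finset.mem_biUnion.mpr ⟨k', ?_, ?_⟩⟩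
    · rw [hP]; exact Finset.mem_filter.mpr ⟨Finset.mem_univ _, hk⟩
    · rw [hP]; exact Finset.mem_filter.mpr ⟨Finset.mem_univ _, hk'⟩
    · exact Finset.mem_filter.mpr ⟨Finset.mem_univ _, heq⟩
  calc S.card ≤ _ := Finset.card_le_card hsub
    _ ≤ ∑ k ∈ P, (P.biUnion (fun k' =>
          Finset.univ.filter fun ab : V × V =>
            ab.2 - (k' : V ≃ₗ[F] V) ab.2 = f k k' ab.1)).card :=
        Finset.card_biUnion_le
    _ ≤ ∑ k ∈ P, ∑ k' ∈ P, (Finset.univ.filter fun ab : V × V =>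
          ab.2 - (k' : V ≃ₗ[F] V) ab.2 = f k k' ab.1).card :=
        Finset.sum_le_sum fun k _ => Finset.card_biUnion_le
    _ ≤ ∑ k ∈ P, ∑ k' ∈ P, Fintype.card V *
          (Finset.univ.filter fun v : V => (k' : V ≃ₗ[F] V) v = v).card :=
        Finset.sum_le_sum fun k _ => Finset.sum_le_sum fun k' _ =>
          stmt16_pairline_card_le K k' _
    _ = (Fintype.card K - 1) * (Fintype.card V *
          ∑ k' ∈ P, (Finset.univ.filter fun v : V => (k' : V ≃ₗ[F] V) v = v).card) := by
        rw [Finset.sum_const, smul_eq_mul, hPcard, ← Finset.mul_sum]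

private lemma stmt16_fixsum_eq :
    FixSum K = ∑ k' ∈ Finset.univ.filter (fun k' : K => k' ≠ 1),
      (Finset.univ.filter fun v : V => (k' : V ≃ₗ[F] V) v = v).card := by
  have e1 : FixSum K = ∑ k : K, Nat.card {v : V // k ≠ 1 ∧ (k : V ≃ₗ[F] V) v = v} := by
    rw [FixSum, Nat.card_congr (Equiv.subtypeProdEquivSigmaSubtype
      (fun (k : K) (v : V) => k ≠ 1 ∧ (k : V ≃ₗ[F] V) v = v))]
    rw [Nat.card_eq_fintype_card, Fintype.card_sigma]
    simp [Nat.card_eq_fintype_card]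
  rw [e1, ← Finset.sum_filter_of_ne (p := fun k : K => k ≠ 1) ?_]
  · apply Finset.sum_congr rfl
    intro k hk
    have hk1 : k ≠ 1 := (Finset.mem_filter.mp hk).2
    rw [Nat.card_eq_fintype_card, Fintype.card_subtype]
    congr 1
    apply Finset.filter_congr
    intro v _
    simp [hk1]
  · intro k _ hne h1
    apply hne
    have : IsEmpty {v : V // k ≠ 1 ∧ (k : V ≃ₗ[F] V) v = v} := ⟨fun v => v.2.1 h1⟩
    simp [Nat.card_of_isEmpty]

private lemma stmt16_fixsum_le_fixmax :
    FixSum K ≤ (Fintype.card K - 1) * fixMax K := by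
  rw [stmt16_fixsum_eq]
  have hb : ∀ k ∈ Finset.univ.filter (fun k : K => k ≠ 1),
      (Finset.univ.filter fun v : V => (k : V ≃ₗ[F] V) v = v).card ≤ fixMax K := by
    intro k hk
    have hk1 : k ≠ 1 := (Finset.mem_filter.mp hk).2
    apply le_csSup
    · refine ⟨Fintype.card V, ?_⟩
      rintro x ⟨g, _, rfl⟩
      rw [Nat.card_eq_fintype_card]
      exact Fintype.card_subtype_le _
    · exact ⟨k, hk1, by rw [Nat.card_eq_fintype_card, Fintype.card_subtype]⟩
  calc _ ≤ ∑ _k ∈ Finset.univ.filter (fun k : K => k ≠ 1), fixMax K :=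
        Finset.sum_le_sum hb
    _ = (Fintype.card K - 1) * fixMax K := by
        rw [Finset.sum_const, smul_eq_mul, Finset.filter_ne',
          Finset.card_erase_of_mem (Finset.mem_univ _), Finset.card_univ]

private lemma stmt16_notsep {θ1 θ2 γ : V}
    (h : ¬ ∀ (δ : V) (k k' : K), δ - θ1 = (k : V ≃ₗ[F] V) (γ - θ1) →
        δ - θ2 = (k' : V ≃ₗ[F] V) (γ - θ2) → δ = γ) :
    ∃ k k' : K, k ≠ 1 ∧ k' ≠ 1 ∧
      θ2 - (k' : V ≃ₗ[F] V) θ2 = (θ1 - (k : V ≃ₗ[F] V) θ1) +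
        ((k : V ≃ₗ[F] V) γ - (k' : V ≃ₗ[F] V) γ) := by
  push_neg at h
  obtain ⟨δ, k, k', h1, h2, hne⟩ := h
  rw [map_sub] at h1 h2
  refine ⟨k, k', ?_, ?_, ?_⟩
  · rintro rfl
    apply hne
    have h1' : δ - θ1 = γ - θ1 := by simpa using h1
    exact sub_left_inj.mp h1'
  · rintro rfl
    apply hne
    have h2' : δ - θ2 = γ - θ2 := by simpa using h2
    exact sub_left_inj.mp h2'
  · have hE : ((k : V ≃ₗ[F] V) γ - (k : V ≃ₗ[F] V) θ1) + θ1
        = ((k' : V ≃ₗ[F] V) γ - (k' : V ≃ₗ[F] V) θ2) + θ2 :=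
      (eq_add_of_sub_eq h1).symm.trans (eq_add_of_sub_eq h2)
    have hz := sub_eq_zero_of_eq hE
    apply eq_of_sub_eq_zero
    calc θ2 - (k' : V ≃ₗ[F] V) θ2 - ((θ1 - (k : V ≃ₗ[F] V) θ1) +
            ((k : V ≃ₗ[F] V) γ - (k' : V ≃ₗ[F] V) γ))
        = -((((k : V ≃ₗ[F] V) γ - (k : V ≃ₗ[F] V) θ1) + θ1)
            - (((k' : V ≃ₗ[F] V) γ - (k' : V ≃ₗ[F] V) θ2) + θ2)) := by abel
      _ = 0 := by rw [hz, neg_zero]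

end CountAux
/-- **Corollary (120211b).** Let `G = V ⋊ K` be an affine group with `K ≤ GL(V)`.
If `4(|K| − 1)·Fix(K) < |V|` then `b(inv(G)) ≤ 2`; in particular this holds whenever
`4|K|(|K| − 1)·fix(K) < |V|`. -/
theorem stmt_16 {F V : Type*} [Field F] [Fintype F] [AddCommGroup V] [Module F V]
    [Fintype V] (K : Subgroup (V ≃ₗ[F] V))
    (X : CohCfg V) (hX : X.S = affOrbSets K) :
    (4 * (Nat.card K - 1) * FixSum K < Nat.card V →
      ∃ Δ : Set V, Δ.ncard ≤ 2 ∧ X.IsBase Δ) ∧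
    (4 * Nat.card K * (Nat.card K - 1) * fixMax K < Nat.card V →
      ∃ Δ : Set V, Δ.ncard ≤ 2 ∧ X.IsBase Δ) := by
  have hFinE : Finite (V ≃ₗ[F] V) :=
    Finite.of_injective (fun (e : V ≃ₗ[F] V) => (⇑e : V → V))
      (fun a b h => by ext x; exact congrFun h x)
  letI : Fintype (V ≃ₗ[F] V) := Fintype.ofFinite _
  letI : Fintype K := Fintype.ofFinite _
  have main : 4 * (Nat.card K - 1) * FixSum K < Nat.card V →
      ∃ Δ : Set V, Δ.ncard ≤ 2 ∧ X.IsBase Δ := by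
    intro hyp
    set n := Fintype.card V with hn
    rw [Nat.card_eq_fintype_card (α := V), Nat.card_eq_fintype_card (α := K),
      stmt16_fixsum_eq K, ← hn] at hyp
    set FS := ∑ k' ∈ Finset.univ.filter (fun k' : K => k' ≠ 1),
        (Finset.univ.filter fun v : V => (k' : V ≃ₗ[F] V) v = v).card with hFSdef
    set cK := Fintype.card K with hcK
    -- hyp : 4 * (cK - 1) * FS < n
    have hn0 : 0 < n := Fintype.card_pos
    have hq2 : 4 * ((cK - 1) * (n * FS)) ≤ (n - 1) * n := by
      have h' : 4 * (cK - 1) * FS ≤ n - 1 := by omega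
      calc 4 * ((cK - 1) * (n * FS)) = 4 * (cK - 1) * FS * n := by ring
        _ ≤ (n - 1) * n := Nat.mul_le_mul h' (le_refl n)
    set Sep : V → V → V → Prop := fun θ1 θ2 γ =>
      ∀ (δ : V) (k k' : K), δ - θ1 = (k : V ≃ₗ[F] V) (γ - θ1) →
        δ - θ2 = (k' : V ≃ₗ[F] V) (γ - θ2) → δ = γ with hSepDef
    -- counting 1
    have hW : (Finset.univ.filter fun gb : V × V => ¬ Sep 0 gb.2 gb.1).card
        ≤ (cK - 1) * (n * FS) := by
      apply stmt16_count_aux K (fun k k' a => (0 - (k : V ≃ₗ[F] V) 0) +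
        ((k : V ≃ₗ[F] V) a - (k' : V ≃ₗ[F] V) a))
      intro ab hab
      simp only [Finset.mem_filter, Finset.mem_univ, true_and, hSepDef] at hab
      exact stmt16_notsep K hab
    have hfiber : ∀ β : V, ((Finset.univ.filter fun gb : V × V => ¬ Sep 0 gb.2 gb.1).filter
        fun gb => gb.2 = β).card = (Finset.univ.filter fun γ : V => ¬ Sep 0 β γ).card := by
      intro β
      apply Finset.card_bij (fun x _ => x.1)
      · intro a ha
        simp only [Finset.mem_filter, Finset.mem_univ, true_and] at ha ⊢
        rw [← ha.2]; exact ha.1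
      · intro a ha b hb hab
        simp only [Finset.mem_filter, Finset.mem_univ, true_and] at ha hb
        exact Prod.ext hab (ha.2.trans hb.2.symm)
      · intro γ hγ
        simp only [Finset.mem_filter, Finset.mem_univ, true_and] at hγ
        exact ⟨(γ, β), by simp [hγ], rfl⟩
    have hsum : ∑ β : V, (Finset.univ.filter fun γ : V => ¬ Sep 0 β γ).card
        = (Finset.univ.filter fun gb : V × V => ¬ Sep 0 gb.2 gb.1).card := by
      rw [Finset.card_eq_sum_card_fiberwise (f := Prod.snd) (t := Finset.univ)
        (fun x _ => Finset.mem_univ _)]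
      exact Finset.sum_congr rfl fun β _ => (hfiber β).symm
    have hβex : ∃ β : V, 4 * (Finset.univ.filter fun γ : V => ¬ Sep 0 β γ).card < n := by
      by_contra hcon
      push_neg at hcon
      have hle : n * n ≤ ∑ β : V, 4 * (Finset.univ.filter fun γ : V => ¬ Sep 0 β γ).card := by
        calc n * n = ∑ _β : V, n := by
              rw [Finset.sum_const, Finset.card_univ, smul_eq_mul, ← hn]
          _ ≤ _ := Finset.sum_le_sum fun β _ => hcon β
      rw [← Finset.mul_sum, hsum] at hle
      have h4W : 4 * (Finset.univ.filter fun gb : V × V => ¬ Sep 0 gb.2 gb.1).card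
          ≤ (n - 1) * n := le_trans (Nat.mul_le_mul (le_refl 4) hW) hq2
      have hnn : n * n ≤ (n - 1) * n := le_trans hle h4W
      have := Nat.le_of_mul_le_mul_right hnn hn0
      omega
    obtain ⟨β, hβ4⟩ := hβex
    set Bad : Finset V := Finset.univ.filter (fun γ : V => ¬ Sep 0 β γ) with hBadDef
    set Δf : Finset V := Finset.univ \ Bad with hΔfDef
    have hBadle : Bad.card ≤ n := Finset.card_le_univ Bad
    have hΔcard : Δf.card + Bad.card = n := by
      rw [hΔfDef, Finset.card_sdiff_of_subset (Finset.subset_univ _), Finset.card_univ, ← hn]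
      omega
    -- counting 2
    have hpair : ∀ γ : V, ∃ θ1 θ2 : V, θ1 ∈ Δf ∧ θ2 ∈ Δf ∧ Sep θ1 θ2 γ := by
      intro γ
      have hBP : (Finset.univ.filter fun ab : V × V => ¬ Sep ab.1 ab.2 γ).card
          ≤ (cK - 1) * (n * FS) := by
        apply stmt16_count_aux K (fun k k' a => (a - (k : V ≃ₗ[F] V) a) +
          ((k : V ≃ₗ[F] V) γ - (k' : V ≃ₗ[F] V) γ))
        intro ab hab
        simp only [Finset.mem_filter, Finset.mem_univ, true_and, hSepDef] at hab
        exact stmt16_notsep K hab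
      have hnot : ¬ (Δf ×ˢ Δf ⊆ Finset.univ.filter fun ab : V × V => ¬ Sep ab.1 ab.2 γ) := by
        intro hsub
        have hcard := Finset.card_le_card hsub
        rw [Finset.card_product] at hcard
        have hD4 : 3 * n + 1 ≤ 4 * Δf.card := by omega
        have hmm : (3 * n + 1) * (3 * n + 1) ≤ (2 * n) * (2 * n) := by
          calc (3 * n + 1) * (3 * n + 1) ≤ (4 * Δf.card) * (4 * Δf.card) :=
                Nat.mul_le_mul hD4 hD4
            _ = 16 * (Δf.card * Δf.card) := by ring
            _ ≤ 16 * (Finset.univ.filter fun ab : V × V => ¬ Sep ab.1 ab.2 γ).card :=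
                Nat.mul_le_mul (le_refl 16) hcard
            _ ≤ 16 * ((cK - 1) * (n * FS)) := Nat.mul_le_mul (le_refl 16) hBP
            _ = 4 * (4 * ((cK - 1) * (n * FS))) := by ring
            _ ≤ 4 * ((n - 1) * n) := Nat.mul_le_mul (le_refl 4) hq2
            _ ≤ 4 * (n * n) := Nat.mul_le_mul (le_refl 4)
                (Nat.mul_le_mul (by omega) (le_refl n))
            _ = (2 * n) * (2 * n) := by ring
        exact absurd hmm (not_le.mpr (Nat.mul_self_lt_mul_self (by omega)))
      obtain ⟨ab, habΔ, habn⟩ := Finset.not_subset.mp hnot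
      rw [Finset.mem_product] at habΔ
      simp only [Finset.mem_filter, Finset.mem_univ, true_and, not_not] at habn
      exact ⟨ab.1, ab.2, habΔ.1, habΔ.2, habn⟩
    -- the class of (θ, δ) in X
    have memcls : ∀ θ γ δ : V, ((θ, δ) ∈ X.cls (θ, γ)) ↔
        ∃ k : K, δ - θ = (k : V ≃ₗ[F] V) (γ - θ) := by
      intro θ γ δ
      have hrS : {q : V × V | ∃ k ∈ K, ∃ v : V, q.1 = k θ + v ∧ q.2 = k γ + v} ∈ X.S := by
        rw [hX]; exact ⟨(θ, γ), rfl⟩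
      have hm : (θ, γ) ∈ {q : V × V | ∃ k ∈ K, ∃ v : V, q.1 = k θ + v ∧ q.2 = k γ + v} :=
        ⟨1, one_mem K, 0, by simp, by simp⟩
      rw [← X.cls_eq hrS hm]
      simp only [Set.mem_setOf_eq]
      constructor
      · rintro ⟨k, hk, v, h1, h2⟩
        refine ⟨⟨k, hk⟩, ?_⟩
        have hv : v = θ - k θ := eq_sub_of_add_eq' h1.symm
        rw [hv] at h2
        rw [map_sub]
        show δ - θ = k γ - k θ
        rw [h2]; abel
      · rintro ⟨⟨k, hk⟩, h⟩
        rw [map_sub] at h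
        have h' : δ - θ = k γ - k θ := h
        refine ⟨k, hk, θ - k θ, by abel, ?_⟩
        rw [eq_add_of_sub_eq h']; abel
    refine ⟨({0, β} : Set V), ?_, ?_⟩
    · refine le_trans (Set.ncard_insert_le _ _) ?_
      simp [Set.ncard_singleton]
    · intro X' hfis hfib
      have hf0 : X'.fiber {0} := hfib 0 (by simp)
      have hfβ : X'.fiber {β} := hfib β (by simp)
      have hΔfib : ∀ θ ∈ Δf, X'.fiber {θ} := by
        intro θ hθ
        have hsepθ : Sep 0 β θ := by
          rw [hΔfDef, Finset.mem_sdiff] at hθ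
          have h2 := hθ.2
          rw [hBadDef] at h2
          simp only [Finset.mem_filter, Finset.mem_univ, true_and, not_not] at h2
          exact h2
        apply CohCfg.fiber_of_sep hfis hf0 hfβ
        intro δ m1 m2
        rw [memcls] at m1 m2
        obtain ⟨k, hk⟩ := m1
        obtain ⟨k', hk'⟩ := m2
        exact hsepθ δ k k' hk hk'
      have hall : ∀ γ : V, X'.fiber {γ} := by
        intro γ
        obtain ⟨θ1, θ2, h1, h2, hsepγ⟩ := hpair γ
        apply CohCfg.fiber_of_sep hfis (hΔfib θ1 h1) (hΔfib θ2 h2)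
        intro δ m1 m2
        rw [memcls] at m1 m2
        obtain ⟨k, hk⟩ := m1
        obtain ⟨k', hk'⟩ := m2
        exact hsepγ δ k k' hk hk'
      exact X'.complete_of_forall_fiber hall
  refine ⟨main, fun hyp2 => main ?_⟩
  have h1 : FixSum K ≤ (Fintype.card K - 1) * fixMax K := stmt16_fixsum_le_fixmax K
  rw [Nat.card_eq_fintype_card (α := K)] at hyp2 ⊢
  set a := Fintype.card K
  set m := fixMax K
  set s := FixSum K
  calc 4 * (a - 1) * s ≤ 4 * (a - 1) * ((a - 1) * m) := Nat.mul_le_mul (le_refl _) h1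
    _ ≤ 4 * a * ((a - 1) * m) := Nat.mul_le_mul (Nat.mul_le_mul (le_refl 4) (Nat.sub_le a 1))
        (le_refl _)
    _ = 4 * a * (a - 1) * m := by ring
    _ < Nat.card V := hyp2
end

section
/- Let V be a finite vector space over a finite field, K ≤ GL(V), and let G be the permutation group on V generated by K and all translations x ↦ x + v. Then for all distinct points α, β ∈ V, the number of points γ ∈ V such that the pairs (α, γ) and (β, γ) lie in the same orbit of G acting componentwise on V × V is at most Fix(K) = Σ_{g ∈ K, g ≠ 1} fix(g), where fix(g) is the number of fixed points of g on V. -/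
open Set

/-- The indistinguishing numbers of `inv(V ⋊ K)` are bounded by `Fix(K)`: for distinct
`α, β ∈ V`, the number of `γ` such that `(α,γ)` and `(β,γ)` lie in the same orbit of the
affine group `G = V ⋊ K` on `V × V` is at most `Σ_{g ∈ K, g ≠ 1} fix(g)`. -/
theorem stmt_17 {F V : Type*} [Field F] [Fintype F] [AddCommGroup V] [Module F V]
    [Fintype V] (K : Subgroup (V ≃ₗ[F] V)) :
    ∀ α β : V, α ≠ β →
      ({γ : V | ∃ k ∈ K, ∃ v : V, k α + v = β ∧ k γ + v = γ}).ncard ≤ FixSum K := by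
  classical
  intro α β hαβ
  set Q : K → V → Prop :=
    fun k γ => (k : V ≃ₗ[F] V) γ + (β - (k : V ≃ₗ[F] V) α) = γ with hQ
  set S : Set V := {γ : V | ∃ k ∈ K, ∃ v : V, k α + v = β ∧ k γ + v = γ} with hS
  have hmem : ∀ γ ∈ S, ∃ k : K, Q k γ := by
    rintro γ ⟨k, hk, v, h1, h2⟩
    refine ⟨⟨k, hk⟩, ?_⟩
    have hv : v = β - k α := by
      rw [← h1]; abel
    simp only [hQ]
    rw [← hv]; exact h2
  -- witness function
  have hbase : ∀ k : K, (∃ γ : V, Q k γ) → Q k (if h : ∃ γ : V, Q k γ then h.choose else 0) := by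
    intro k h
    rw [dif_pos h]
    exact h.choose_spec
  set b : K → V := fun k => if h : ∃ γ : V, Q k γ then h.choose else 0 with hb
  have hk1 : ∀ k : K, ∀ γ : V, Q k γ → k ≠ 1 := by
    intro k γ hq hk
    subst hk
    simp only [hQ, OneMemClass.coe_one] at hq
    have h0 : γ + (β - α) = γ := hq
    have hz : β - α = 0 := by
      nth_rewrite 2 [← add_zero γ] at h0
      exact add_left_cancel h0
    exact hαβ (sub_eq_zero.mp hz).symm
  have hfix : ∀ k : K, ∀ γ : V, Q k γ →
      (k : V ≃ₗ[F] V) (γ - b k) = γ - b k := by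
    intro k γ hq
    have hbk : Q k (b k) := hbase k ⟨γ, hq⟩
    simp only [hQ] at hq hbk
    rw [map_sub]
    have h1 : (k : V ≃ₗ[F] V) γ = γ - (β - (k : V ≃ₗ[F] V) α) := by
      rw [eq_sub_iff_add_eq]; exact hq
    have h2 : (k : V ≃ₗ[F] V) (b k) = b k - (β - (k : V ≃ₗ[F] V) α) := by
      rw [eq_sub_iff_add_eq]; exact hbk
    rw [h1, h2]; abel
  -- the injection
  set T := {x : K × V // x.1 ≠ 1 ∧ (x.1 : V ≃ₗ[F] V) x.2 = x.2} with hT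
  set f : ↥S → T := fun γ =>
    ⟨((hmem γ.1 γ.2).choose, γ.1 - b (hmem γ.1 γ.2).choose),
      hk1 _ _ (hmem γ.1 γ.2).choose_spec, hfix _ _ (hmem γ.1 γ.2).choose_spec⟩ with hf
  have hinj : Function.Injective f := by
    intro γ₁ γ₂ h
    have h' := congrArg (fun x : T => x.1) h
    simp only [hf] at h'
    have hk : (hmem γ₁.1 γ₁.2).choose = (hmem γ₂.1 γ₂.2).choose :=
      congrArg Prod.fst h'
    have hv : γ₁.1 - b (hmem γ₁.1 γ₁.2).choose
        = γ₂.1 - b (hmem γ₂.1 γ₂.2).choose := congrArg Prod.snd h'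
    rw [hk] at hv
    exact Subtype.ext (sub_left_inj.mp hv)
  haveI : Finite (V ≃ₗ[F] V) :=
    Finite.of_injective (fun e => (⇑e : V → V)) DFunLike.coe_injective
  calc S.ncard = Nat.card ↥S := (Nat.card_coe_set_eq S).symm
    _ ≤ Nat.card T := Nat.card_le_card_of_injective f hinj
    _ = FixSum K := rfl
end
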